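/- arXiv:2409.10292 — 2 statements merged into one kernel-verified Lean document; each statement's English description precedes it below -/
import Mathlib

section
/- Let A = (a_{ij}) be an n×n complex matrix. Then for every diagonal index k one has |a_{kk}| ≤ max_{λ ∈ σ(A)} |λ| + 2√(n(n−1)) · ‖J ∘ A‖, where σ(A) is the set of eigenvalues of A. -/
open Matrix

/-- The Frobenius norm of a complex matrix. -/
noncomputable def frob {n : ℕ} (A : Matrix (Fin n) (Fin n) ℂ) : ℝ :=
  Real.sqrt (∑ i, ∑ j, ‖A i j‖ ^ 2)

/-- The off-diagonal part `J ∘ A` of a matrix (Hadamard product with the matrix `J`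
having zeros on the diagonal and ones elsewhere). -/
def offDiag' {n : ℕ} (A : Matrix (Fin n) (Fin n) ℂ) : Matrix (Fin n) (Fin n) ℂ :=
  fun i j => if i = j then 0 else A i j

/-!
Gershgorin's theorem localised to a connected component of the discs. Let `D` be the diagonal of
`A` and `A_t = D + t (A - D)` for `t ∈ [0, 1]`; the discs of `A_t` lie in those of `A`, so the
union `U` of the discs reachable from the `k`-th one through chains of intersecting discs and the
union of the remaining ones keep every spectrum apart. Eigenvalues move continuously, because
`|det (μ - A_t)| = ∏ |μ - λ_i|` is small only near an eigenvalue, so the set of `t` for which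
`A_t` has an eigenvalue in `U` is clopen; it contains `0`, where `a_kk` is one, hence also `1`.
Consecutive centres along a chain are within `R_i + R_j` of each other, so that eigenvalue is
within `2 ∑ R_i` of `a_kk`, and Cauchy–Schwarz over the `n (n - 1)` off-diagonal entries gives
`∑ R_i ≤ √(n (n - 1)) ‖J ∘ A‖`.
-/

open Polynomial Metric Topology

theorem Polynomial.Splits.exists_mem_roots_norm_sub_pow_le {K : Type*} [NormedField K]
    {p : K[X]} (hp : p.Splits) (hm : p.Monic) (hdeg : p.natDegree ≠ 0) (z : K) :
    ∃ a ∈ p.roots, ‖z - a‖ ^ p.natDegree ≤ ‖p.eval z‖ := by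
  classical
  have hcard : Multiset.card p.roots = p.natDegree := hp.natDegree_eq_card_roots.symm
  obtain ⟨a, ha, hmin⟩ := p.roots.toFinset.exists_min_image (fun b => ‖z - b‖)
    (Multiset.toFinset_nonempty.mpr (Multiset.card_pos.mp (by omega)))
  refine ⟨a, Multiset.mem_toFinset.mp ha, ?_⟩
  calc ‖z - a‖ ^ p.natDegree = (p.roots.map fun _ => ‖z - a‖).prod := by simp [hcard]
    _ ≤ (p.roots.map fun b => ‖z - b‖).prod :=
      Multiset.prod_map_le_prod_map₀ _ _ (fun _ _ => norm_nonneg _)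
        fun b hb => hmin b (Multiset.mem_toFinset.mpr hb)
    _ = ‖p.eval z‖ := by
      rw [hp.eval_eq_prod_roots_of_monic hm]
      exact p.roots.prod_hom' (normHom : K →*₀ ℝ) (z - ·)

variable {ι : Type*}

section DiscGraph

variable {α : Type*} [PseudoMetricSpace α] (c : ι → α) (r : ι → ℝ)

def discGraph : SimpleGraph ι :=
  SimpleGraph.fromRel fun i j => (closedBall (c i) (r i) ∩ closedBall (c j) (r j)).Nonempty

variable {c r}

theorem dist_le_of_discGraph_adj {i j : ι} (h : (discGraph c r).Adj i j) :
    dist (c i) (c j) ≤ r i + r j := by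
  obtain ⟨-, ⟨z, hzi, hzj⟩ | ⟨z, hzj, hzi⟩⟩ := h <;>
  · rw [mem_closedBall] at hzi hzj
    linarith [dist_triangle_left (c i) (c j) z]

theorem dist_add_add_le_two_mul_sum_support {i j : ι} (p : (discGraph c r).Walk i j) :
    dist (c i) (c j) + r i + r j ≤ 2 * (p.support.map r).sum := by
  induction p with
  | nil =>
    simp only [SimpleGraph.Walk.support_nil, List.map_cons, List.map_nil, List.sum_cons,
      List.sum_nil, dist_self]
    linarith
  | @cons u v w hadj p ih =>
    simp only [SimpleGraph.Walk.support_cons, List.map_cons, List.sum_cons]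
    linarith [dist_le_of_discGraph_adj hadj, dist_triangle (c u) (c v) (c w)]

theorem dist_add_add_le_of_discGraph_reachable [Fintype ι] [DecidableEq ι] (hr : ∀ i, 0 ≤ r i)
    {i j : ι} (h : (discGraph c r).Reachable i j) :
    dist (c i) (c j) + r i + r j ≤ 2 * ∑ x, r x := by
  obtain ⟨p⟩ := h
  refine (dist_add_add_le_two_mul_sum_support p.bypass).trans ?_
  rw [← List.sum_toFinset _ p.bypass_isPath.support_nodup]
  gcongr 2 * ?_
  exact Finset.sum_le_sum_of_subset_of_nonneg (Finset.subset_univ _) fun x _ _ => hr x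

theorem disjoint_closedBall_of_discGraph_reachable {k i j : ι}
    (hi : (discGraph c r).Reachable k i) (hj : ¬ (discGraph c r).Reachable k j) :
    Disjoint (closedBall (c i) (r i)) (closedBall (c j) (r j)) := by
  rw [Set.disjoint_iff_inter_eq_empty, ← Set.not_nonempty_iff_eq_empty]
  intro hij
  have hne : i ≠ j := by rintro rfl; exact hj hi
  exact hj (hi.trans (SimpleGraph.Adj.reachable ⟨hne, Or.inl hij⟩))

end DiscGraph

namespace Matrix

variable [Fintype ι] [DecidableEq ι]

theorem mem_spectrum_iff_det_eq_zero {A : Matrix ι ι ℂ} {μ : ℂ} :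
    μ ∈ spectrum ℂ A ↔ (scalar ι μ - A).det = 0 := by
  rw [mem_spectrum_iff_isRoot_charpoly, IsRoot, eval_charpoly]

theorem exists_mem_spectrum_dist_pow_le (A : Matrix ι ι ℂ) [Nonempty ι] (z : ℂ) :
    ∃ μ ∈ spectrum ℂ A, dist z μ ^ Fintype.card ι ≤ ‖(scalar ι z - A).det‖ := by
  have hdeg : A.charpoly.natDegree = Fintype.card ι := A.charpoly_natDegree_eq_dim
  obtain ⟨μ, hμ, hle⟩ := (IsAlgClosed.splits A.charpoly).exists_mem_roots_norm_sub_pow_le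
    A.charpoly_monic (by rw [hdeg]; exact Fintype.card_ne_zero) z
  refine ⟨μ, mem_spectrum_iff_isRoot_charpoly.mpr (isRoot_of_mem_roots hμ), ?_⟩
  rwa [hdeg, eval_charpoly, ← dist_eq_norm] at hle

def gershgorinRadius {K : Type*} [Norm K] (A : Matrix ι ι K) (i : ι) : ℝ :=
  ∑ j ∈ Finset.univ.erase i, ‖A i j‖

theorem gershgorinRadius_nonneg {K : Type*} [SeminormedAddGroup K] (A : Matrix ι ι K) (i : ι) :
    0 ≤ A.gershgorinRadius i :=
  Finset.sum_nonneg fun _ _ => norm_nonneg _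

theorem exists_dist_le_gershgorinRadius {K : Type*} [NormedField K] {A : Matrix ι ι K} {μ : K}
    (hμ : μ ∈ spectrum K A) : ∃ i, dist μ (A i i) ≤ A.gershgorinRadius i := by
  rw [← spectrum_toLin', ← Module.End.hasEigenvalue_iff_mem_spectrum] at hμ
  simpa only [mem_closedBall, gershgorinRadius] using eigenvalue_mem_ball hμ

theorem isClosed_setOf_exists_mem_spectrum {X : Type*} [TopologicalSpace X]
    {H : X → Matrix ι ι ℂ} (hH : Continuous H) {U : Set ℂ} (hU : IsCompact U) :
    IsClosed {x | ∃ μ ∈ U, μ ∈ spectrum ℂ (H x)} := by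
  have := isCompact_iff_compactSpace.mp hU
  have hdet : Continuous fun p : X × U => (scalar ι (p.2 : ℂ) - H p.1).det := by
    simp only [scalar_apply]; fun_prop
  have hzero : IsClosed {p : X × U | (scalar ι (p.2 : ℂ) - H p.1).det = 0} :=
    isClosed_eq hdet continuous_const
  convert isClosedMap_fst_of_compactSpace _ hzero using 1
  ext x
  simp [mem_spectrum_iff_det_eq_zero]

theorem eventually_exists_mem_spectrum_dist_lt {X : Type*} [TopologicalSpace X]
    {H : X → Matrix ι ι ℂ} (hH : Continuous H) {x : X} {μ : ℂ} (hμ : μ ∈ spectrum ℂ (H x))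
    {δ : ℝ} (hδ : 0 < δ) : ∀ᶠ y in 𝓝 x, ∃ ν ∈ spectrum ℂ (H y), dist μ ν < δ := by
  have : Nonempty ι := by
    by_contra h
    rw [not_nonempty_iff] at h
    simp at hμ
  have hdet : Continuous fun y => (scalar ι μ - H y).det := by
    simp only [scalar_apply]; fun_prop
  have hsmall : ∀ᶠ y in 𝓝 x, ‖(scalar ι μ - H y).det‖ < δ ^ Fintype.card ι := by
    refine (hdet.norm.tendsto x).eventually (gt_mem_nhds ?_)
    rw [mem_spectrum_iff_det_eq_zero.mp hμ, norm_zero]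
    positivity
  filter_upwards [hsmall] with y hy
  obtain ⟨ν, hν, hle⟩ := exists_mem_spectrum_dist_pow_le (H y) μ
  exact ⟨ν, hν, (pow_lt_pow_iff_left₀ dist_nonneg hδ.le Fintype.card_ne_zero).mp
    (hle.trans_lt hy)⟩

theorem exists_mem_spectrum_of_spectrum_subset_union {X : Type*} [TopologicalSpace X]
    [PreconnectedSpace X] {H : X → Matrix ι ι ℂ} (hH : Continuous H) {U V : Set ℂ}
    (hU : IsCompact U) (hV : IsClosed V) (hUV : Disjoint U V)
    (hsub : ∀ x, spectrum ℂ (H x) ⊆ U ∪ V) {x₀ : X} (h₀ : ∃ μ ∈ U, μ ∈ spectrum ℂ (H x₀))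
    (x : X) : ∃ μ ∈ U, μ ∈ spectrum ℂ (H x) := by
  obtain ⟨δ, hδ, hδU⟩ := hU.exists_thickening_subset_open hV.isOpen_compl hUV.subset_compl_right
  have hopen : IsOpen {x | ∃ μ ∈ U, μ ∈ spectrum ℂ (H x)} := by
    refine isOpen_iff_mem_nhds.mpr fun y ⟨μ, hμU, hμ⟩ => ?_
    filter_upwards [eventually_exists_mem_spectrum_dist_lt hH hμ hδ] with z ⟨ν, hν, hdist⟩
    have hνU : ν ∈ thickening δ U := mem_thickening_iff.mpr ⟨μ, hμU, by rwa [dist_comm]⟩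
    exact ⟨ν, (hsub z hν).resolve_right (hδU hνU), hν⟩
  exact Set.eq_univ_iff_forall.mp
    (IsClopen.eq_univ ⟨isClosed_setOf_exists_mem_spectrum hH hU, hopen⟩ ⟨x₀, h₀⟩) x

theorem spectrum_diagonal_add_smul_subset {K : Type*} [NormedField K] (A : Matrix ι ι K) {t : K}
    (ht : ‖t‖ ≤ 1) :
    spectrum K (diagonal A.diag + t • (A - diagonal A.diag)) ⊆
      ⋃ i, closedBall (A i i) (A.gershgorinRadius i) := by
  intro μ hμ
  obtain ⟨i, hi⟩ := exists_dist_le_gershgorinRadius hμ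
  refine Set.mem_iUnion.mpr ⟨i, mem_closedBall.mpr ?_⟩
  simp only [add_apply, diagonal_apply_eq, diag_apply, smul_apply, sub_apply, sub_self,
    smul_zero, add_zero] at hi
  refine hi.trans (Finset.sum_le_sum fun j hj => ?_)
  rw [add_apply, smul_apply, sub_apply, diagonal_apply_ne _ (Finset.ne_of_mem_erase hj).symm,
    zero_add, sub_zero, smul_eq_mul, norm_mul]
  exact mul_le_of_le_one_left (norm_nonneg _) ht

theorem exists_mem_spectrum_mem_closedBall_of_disjoint (A : Matrix ι ι ℂ) {S : Set ι} {k : ι}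
    (hk : k ∈ S) (hS : ∀ i ∈ S, ∀ j ∉ S, Disjoint (closedBall (A i i) (A.gershgorinRadius i))
      (closedBall (A j j) (A.gershgorinRadius j))) :
    ∃ i ∈ S, ∃ μ ∈ spectrum ℂ A, μ ∈ closedBall (A i i) (A.gershgorinRadius i) := by
  -- clamping `t` to `[0, 1]` puts the path on the connected space `ℝ` and keeps `‖t‖ ≤ 1`
  let H : ℝ → Matrix ι ι ℂ := fun t =>
    diagonal A.diag + ((max 0 (min 1 t) : ℝ) : ℂ) • (A - diagonal A.diag)
  let U := ⋃ i ∈ S, closedBall (A i i) (A.gershgorinRadius i)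
  let V := ⋃ i ∈ Sᶜ, closedBall (A i i) (A.gershgorinRadius i)
  have hsub : ∀ t, spectrum ℂ (H t) ⊆ U ∪ V := by
    intro t
    refine (spectrum_diagonal_add_smul_subset A ?_).trans fun μ hμ => ?_
    · rw [Complex.norm_real, Real.norm_eq_abs, abs_le]
      constructor <;> linarith [le_max_left 0 (min 1 t), max_le zero_le_one (min_le_left 1 t)]
    · obtain ⟨i, hi⟩ := Set.mem_iUnion.mp hμ
      by_cases hiS : i ∈ S
      · exact Or.inl (Set.mem_biUnion hiS hi)
      · exact Or.inr (Set.mem_biUnion hiS hi)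
  have h₀ : ∃ μ ∈ U, μ ∈ spectrum ℂ (H 0) :=
    ⟨A k k, Set.mem_biUnion hk (mem_closedBall_self (A.gershgorinRadius_nonneg k)),
      by simp [H]⟩
  obtain ⟨μ, hμU, hμ⟩ := exists_mem_spectrum_of_spectrum_subset_union (by fun_prop)
    (S.toFinite.isCompact_biUnion fun _ _ => isCompact_closedBall _ _)
    (Sᶜ.toFinite.isClosed_biUnion fun _ _ => isClosed_closedBall)
    (Set.disjoint_iUnion₂_left.mpr fun i hi => Set.disjoint_iUnion₂_right.mpr fun j hj =>
      hS i hi j hj) hsub h₀ 1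
  obtain ⟨i, hi, hμi⟩ := Set.mem_iUnion₂.mp hμU
  exact ⟨i, hi, μ, by simpa [H] using hμ, hμi⟩

theorem exists_mem_spectrum_dist_le_two_mul_sum_gershgorinRadius (A : Matrix ι ι ℂ) (k : ι) :
    ∃ μ ∈ spectrum ℂ A, dist μ (A k k) ≤ 2 * ∑ i, A.gershgorinRadius i := by
  obtain ⟨i, hki, μ, hμ, hμi⟩ := A.exists_mem_spectrum_mem_closedBall_of_disjoint
    (S := {i | (discGraph A.diag A.gershgorinRadius).Reachable k i}) (.refl k)
    fun i hi j hj => disjoint_closedBall_of_discGraph_reachable hi hj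
  have hchain : dist (A k k) (A i i) + A.gershgorinRadius k + A.gershgorinRadius i ≤
      2 * ∑ x, A.gershgorinRadius x :=
    dist_add_add_le_of_discGraph_reachable A.gershgorinRadius_nonneg hki
  refine ⟨μ, hμ, ?_⟩
  linarith [mem_closedBall.mp hμi, A.gershgorinRadius_nonneg k,
    dist_triangle μ (A i i) (A k k), dist_comm (A i i) (A k k)]

end Matrix

theorem sum_offDiag'_row_eq_sum_erase {n : ℕ} (A : Matrix (Fin n) (Fin n) ℂ) {f : ℂ → ℝ}
    (hf : f 0 = 0) (i : Fin n) : ∑ j, f (offDiag' A i j) = ∑ j ∈ Finset.univ.erase i, f (A i j) := by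
  rw [← Finset.sum_erase (a := i) _ (by simp [offDiag', hf])]
  exact Finset.sum_congr rfl fun j hj => by simp [offDiag', (Finset.ne_of_mem_erase hj).symm]

theorem sum_gershgorinRadius_le_sqrt_mul_frob {n : ℕ} (A : Matrix (Fin n) (Fin n) ℂ) :
    ∑ i, A.gershgorinRadius i ≤ √(n * (n - 1)) * frob (offDiag' A) := by
  let s := Finset.univ.sigma fun i : Fin n => Finset.univ.erase i
  have hcard : ∑ _ ∈ s, (1 : ℝ) ^ 2 = n * (n - 1) := by
    rcases n with _ | n <;> simp [s, Finset.card_sigma]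
  have hfrob : frob (offDiag' A) = √(∑ x ∈ s, ‖A x.1 x.2‖ ^ 2) := by
    rw [frob, Finset.sum_sigma]
    simp_rw [sum_offDiag'_row_eq_sum_erase A (f := fun z => ‖z‖ ^ 2) (by simp)]
  calc ∑ i, A.gershgorinRadius i = ∑ x ∈ s, 1 * ‖A x.1 x.2‖ := by
        simp [s, Finset.sum_sigma, gershgorinRadius]
    _ ≤ _ := Real.sum_mul_le_sqrt_mul_sqrt _ _ _
    _ = _ := by rw [hcard, hfrob]

/-- for every diagonal index `k`,
`|a_kk| ≤ max_{λ∈σ(A)} |λ| + 2√(n(n-1)) ‖J ∘ A‖`. -/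
theorem abs_diag_le {n : ℕ} (A : Matrix (Fin n) (Fin n) ℂ) (k : Fin n) :
    ‖A k k‖ ≤ sSup ((fun μ : ℂ => ‖μ‖) '' spectrum ℂ A) +
      2 * Real.sqrt (n * (n - 1)) * frob (offDiag' A) := by
  obtain ⟨μ, hμ, hdist⟩ := A.exists_mem_spectrum_dist_le_two_mul_sum_gershgorinRadius k
  have hμ_le : ‖μ‖ ≤ sSup ((fun μ : ℂ => ‖μ‖) '' spectrum ℂ A) :=
    le_csSup (A.finite_spectrum.image _).bddAbove ⟨μ, hμ, rfl⟩
  have htri : ‖A k k‖ ≤ ‖μ‖ + dist μ (A k k) := by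
    rw [dist_eq_norm']; exact norm_le_insert' _ _
  linarith [sum_gershgorinRadius_le_sqrt_mul_frob A]
end

section
/- Let A and Z be n×n complex matrices with Z nonzero and rank-deficient, and suppose A(Im(Z)) ⊆ Im(Z), where Im(Z) is the column space (range) of Z. Then there exists a sequence (Q_j) of invertible n×n complex matrices converging to Z such that sup_j ‖Q_j^{-1} A Q_j‖ < ∞. -/
/-!
Let `E` be an idempotent with range `Im Z`; invariance of `Im Z` under `A` then reads
`(1 - E) A E = 0`. Since `E` and `Z` have the same range, `Z = E Y` for an invertible `Y`.
For `c ≠ 0` the matrix `S_c = E + c (1 - E)` is invertible with inverse `S_{c⁻¹}`, and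
`S_c⁻¹ A S_c = E A E + (1 - E) A (1 - E) + c E A (1 - E)`, the term carrying `c⁻¹` being
`(1 - E) A E = 0`. So `Q_j = S_{1/(j+1)} Y` tends to `E Y = Z`, while `Q_j⁻¹ A Q_j` converges
and is therefore bounded.
-/

open Filter Topology Matrix

open LinearMap Module

section ScaleCompl

variable {𝕜 R : Type*} [Field 𝕜] [Ring R] [Algebra 𝕜 R] {e : R}

def scaleCompl (e : R) (c : 𝕜) : R := e + c • (1 - e)

@[simp]
theorem scaleCompl_zero (e : R) : scaleCompl e (0 : 𝕜) = e := by
  simp [scaleCompl]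

@[simp]
theorem scaleCompl_one (e : R) : scaleCompl e (1 : 𝕜) = 1 := by
  simp [scaleCompl]

theorem IsIdempotentElem.scaleCompl_mul_scaleCompl (he : IsIdempotentElem e) (c d : 𝕜) :
    scaleCompl e c * scaleCompl e d = scaleCompl e (c * d) := by
  simp only [scaleCompl, mul_add, add_mul, smul_mul_assoc, mul_smul_comm, smul_smul, he.eq,
    he.mul_one_sub_self, he.one_sub_mul_self, he.one_sub.eq, smul_zero, add_zero, zero_add]
  rw [mul_comm d c]

theorem IsIdempotentElem.isUnit_scaleCompl (he : IsIdempotentElem e) {c : 𝕜} (hc : c ≠ 0) :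
    IsUnit (scaleCompl e c) :=
  ⟨⟨scaleCompl e c, scaleCompl e c⁻¹,
    by rw [he.scaleCompl_mul_scaleCompl, mul_inv_cancel₀ hc, scaleCompl_one],
    by rw [he.scaleCompl_mul_scaleCompl, inv_mul_cancel₀ hc, scaleCompl_one]⟩, rfl⟩

theorem scaleCompl_inv_mul_mul_scaleCompl {a : R} (hae : (1 - e) * a * e = 0) {c : 𝕜}
    (hc : c ≠ 0) :
    scaleCompl e c⁻¹ * a * scaleCompl e c =
      e * a * e + (1 - e) * a * (1 - e) + c • (e * a * (1 - e)) := by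
  simp only [scaleCompl, mul_add, add_mul, smul_add, smul_mul_assoc, mul_smul_comm, smul_smul,
    hae, smul_zero, mul_inv_cancel₀ hc, one_smul, add_zero]
  abel

end ScaleCompl

theorem LinearMap.IsIdempotentElem.one_sub_mul_mul_eq_zero {R M : Type*} [Ring R]
    [AddCommGroup M] [Module R M] {e a : Module.End R M} (he : IsIdempotentElem e)
    (ha : range e ∈ Module.End.invtSubmodule a) :
    (1 - e) * a * e = 0 := by
  rw [sub_mul, sub_mul, one_mul, sub_eq_zero]
  exact (conj_eq_of_range_mem_invtSubmodule he ha).symm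

theorem Module.End.exists_isIdempotentElem_mul_isUnit_eq {K V : Type*} [Field K]
    [AddCommGroup V] [Module K V] [FiniteDimensional K V] (f : Module.End K V) :
    ∃ e y : Module.End K V, IsIdempotentElem e ∧ range e = range f ∧ IsUnit y ∧ e * y = f := by
  obtain ⟨W, hW⟩ := (range f).exists_isCompl
  obtain ⟨C, hC⟩ := (ker f).exists_isCompl
  have hdim : finrank K (ker f) = finrank K W := by
    have := (range f).finrank_add_eq_of_isCompl hW
    have := f.finrank_range_add_finrank_ker
    omega
  -- `y = f + k`, where `k` maps `ker f` isomorphically onto the complement `W` of `range f`.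
  let k : Module.End K V :=
    W.subtype ∘ₗ (LinearEquiv.ofFinrankEq _ _ hdim).toLinearMap ∘ₗ (ker f).projectionOnto C hC
  have hkW : ∀ x, k x ∈ W := fun x => Submodule.coe_mem _
  refine ⟨(range f).projection W hW, f + k, Submodule.isIdempotentElem_projection hW,
    Submodule.range_projection hW, ?_, ?_⟩
  · rw [isUnit_iff_ker_eq_bot, eq_bot_iff]
    intro x hx
    have hsum : f x + k x = 0 := hx
    have hfx : f x = 0 := by
      refine Submodule.disjoint_def.mp hW.disjoint _ (mem_range_self f x) ?_
      rw [eq_neg_of_add_eq_zero_left hsum]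
      exact W.neg_mem (hkW x)
    have hkx : k x = 0 := by simpa [hfx] using hsum
    simpa [k, Submodule.projectionOnto_apply_of_mem_left hC (show x ∈ ker f from hfx)] using hkx
  · ext1 x
    simp [Submodule.projection_apply_of_mem_left hW (mem_range_self f x),
      Submodule.projection_apply_of_mem_right hW (hkW x)]

theorem Matrix.exists_isIdempotentElem_mul_isUnit_eq_of_mem_invtSubmodule {n K : Type*}
    [Fintype n] [DecidableEq n] [Field K] {A Z : Matrix n n K}
    (hAZ : range Z.mulVecLin ∈ Module.End.invtSubmodule A.mulVecLin) :
    ∃ E Y : Matrix n n K, IsIdempotentElem E ∧ (1 - E) * A * E = 0 ∧ IsUnit Y ∧ E * Y = Z := by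
  let φ : Matrix n n K ≃ₐ[K] Module.End K (n → K) := Matrix.toLinAlgEquiv'
  obtain ⟨e, y, he, hrange, hy, hey⟩ := (φ Z).exists_isIdempotentElem_mul_isUnit_eq
  refine ⟨φ.symm e, φ.symm y, he.map φ.symm, φ.injective ?_, hy.map φ.symm, ?_⟩
  · rw [map_mul, map_mul, map_sub, map_one, φ.apply_symm_apply, map_zero]
    exact LinearMap.IsIdempotentElem.one_sub_mul_mul_eq_zero he (hrange ▸ hAZ)
  · rw [← map_mul, hey, φ.symm_apply_apply]

theorem continuous_frob {n : ℕ} : Continuous (frob : Matrix (Fin n) (Fin n) ℂ → ℝ) := by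
  unfold frob
  fun_prop

theorem exists_seq_frob_conj_bounded_general {n : ℕ} (A Z : Matrix (Fin n) (Fin n) ℂ)
    (hAZ : ∀ x ∈ LinearMap.range Z.mulVecLin, A.mulVec x ∈ LinearMap.range Z.mulVecLin) :
    ∃ Q : ℕ → Matrix (Fin n) (Fin n) ℂ,
      (∀ j, IsUnit (Q j)) ∧ Tendsto Q atTop (𝓝 Z) ∧
      ∃ C : ℝ, ∀ j, frob ((Q j)⁻¹ * A * Q j) ≤ C := by
  obtain ⟨E, Y, hE, hAE, hY, rfl⟩ :=
    Matrix.exists_isIdempotentElem_mul_isUnit_eq_of_mem_invtSubmodule hAZ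
  set c : ℕ → ℂ := fun j => 1 / ((j : ℂ) + 1)
  have hc0 : ∀ j, c j ≠ 0 := fun j => one_div_ne_zero (Nat.cast_add_one_ne_zero j)
  have hc : Tendsto c atTop (𝓝 0) := tendsto_one_div_add_atTop_nhds_zero_nat
  let B : ℂ → Matrix (Fin n) (Fin n) ℂ := fun t =>
    Y⁻¹ * (E * A * E + (1 - E) * A * (1 - E) + t • (E * A * (1 - E))) * Y
  have hconj : ∀ j, (scaleCompl E (c j) * Y)⁻¹ * A * (scaleCompl E (c j) * Y) = B (c j) := by
    intro j
    have hinv : (scaleCompl E (c j))⁻¹ = scaleCompl E (c j)⁻¹ := Matrix.inv_eq_left_inv (by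
      rw [hE.scaleCompl_mul_scaleCompl, inv_mul_cancel₀ (hc0 j), scaleCompl_one])
    simp only [B]
    rw [Matrix.mul_inv_rev, hinv, ← scaleCompl_inv_mul_mul_scaleCompl hAE (hc0 j)]
    simp only [Matrix.mul_assoc]
  refine ⟨fun j => scaleCompl E (c j) * Y, fun j => (hE.isUnit_scaleCompl (hc0 j)).mul hY, ?_, ?_⟩
  · have : Continuous fun t : ℂ => scaleCompl E t * Y := by unfold scaleCompl; fun_prop
    have hlim := (this.tendsto 0).comp hc
    rwa [scaleCompl_zero] at hlim
  · have : Continuous fun t => frob (B t) := continuous_frob.comp (by fun_prop)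
    obtain ⟨C, hC⟩ := ((this.tendsto 0).comp hc).bddAbove_range
    exact ⟨C, fun j => hconj j ▸ hC ⟨j, rfl⟩⟩

/-- if `Z ≠ 0` is rank-deficient and the range of `Z` is an invariant
subspace of `A`, then there is a sequence of invertible matrices `Q_j → Z` along
which `‖Q_j⁻¹ A Q_j‖` stays bounded. -/
theorem exists_seq_frob_conj_bounded {n : ℕ} (A Z : Matrix (Fin n) (Fin n) ℂ)
    (hZ0 : Z ≠ 0) (hZr : Z.rank < n)
    (hAZ : ∀ x ∈ LinearMap.range Z.mulVecLin, A.mulVec x ∈ LinearMap.range Z.mulVecLin) :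
    ∃ Q : ℕ → Matrix (Fin n) (Fin n) ℂ,
      (∀ j, IsUnit (Q j)) ∧ Tendsto Q atTop (𝓝 Z) ∧
      ∃ C : ℝ, ∀ j, frob ((Q j)⁻¹ * A * Q j) ≤ C :=
  exists_seq_frob_conj_bounded_general A Z hAZ
end
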